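/- arXiv:2211.02399 — 2 statements merged into one kernel-verified Lean document; each statement's English description precedes it below -/
import Mathlib

section
/- Under the same setting, for l+1 ≤ z ≤ n+1, Q(Y_{n+1} = 0 and L ≤ l | Z = z) = (n-z+1) B_{z,l}(ν)/(n+1), and for 0 ≤ z ≤ l, Q(Y_{n+1}=0 and L ≤ l | Z = z) = (n-z+1)/(n+1). -/
/-!
When the last coordinate is `0`, the first `n` coordinates carry all `z` ones, so every term of
the sum is `B_{z,l}(ν)`. There are `C(n, z)` such strings, and `C(n, z) / C(n + 1, z)` is
`(n - z + 1) / (n + 1)`. For `z ≤ l` the binomial CDF is the full binomial expansion, hence `1`.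
-/

/-- Binomial CDF: `B z l p = ∑_{j=0}^{l} C(z,j) p^j (1-p)^{z-j}`. -/
noncomputable def binCDF (z l : ℕ) (p : ℝ) : ℝ :=
  ∑ j ∈ Finset.range (l + 1), (z.choose j : ℝ) * p ^ j * (1 - p) ^ (z - j)

/-- The number of ones among the first `n` coordinates of `y : Fin (n+1) → Bool`. -/
def onesFirst (n : ℕ) (y : Fin (n + 1) → Bool) : ℕ :=
  (Finset.univ.filter (fun i : Fin (n + 1) => i.val < n ∧ y i = true)).card

open Finset

lemma binCDF_eq_one_of_le {z l : ℕ} (h : z ≤ l) (p : ℝ) : binCDF z l p = 1 := by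
  have hsub : range (z + 1) ⊆ range (l + 1) := range_subset_range.2 (by omega)
  rw [binCDF, ← sum_subset hsub]
  · calc ∑ j ∈ range (z + 1), (z.choose j : ℝ) * p ^ j * (1 - p) ^ (z - j)
        = (p + (1 - p)) ^ z := by
          rw [add_pow]
          exact sum_congr rfl fun j _ => by ring
      _ = 1 := by rw [add_sub_cancel, one_pow]
  · intro j _ hj
    rw [mem_range, not_lt] at hj
    rw [Nat.choose_eq_zero_of_lt (by omega), Nat.cast_zero, zero_mul, zero_mul]

lemma onesFirst_eq_card_of_last_eq_false {n : ℕ} {y : Fin (n + 1) → Bool}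
    (hy : y (Fin.last n) = false) : onesFirst n y = #{i | y i = true} := by
  refine congrArg card (filter_congr fun i _ => and_iff_right_of_imp fun hi => ?_)
  refine lt_of_le_of_ne (Nat.lt_succ_iff.1 i.isLt) fun hin => ?_
  rw [show i = Fin.last n from Fin.ext hin, hy] at hi
  exact Bool.false_ne_true hi

lemma card_filter_card_eq_and_apply_eq_false {α : Type*} [Fintype α] [DecidableEq α]
    (a : α) (z : ℕ) :
    #{y : α → Bool | #{i | y i = true} = z ∧ y a = false}
      = (Fintype.card α - 1).choose z := by
  rw [← card_univ, ← card_erase_of_mem (mem_univ a), ← card_powersetCard]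
  refine card_nbij' (fun y => ({i | y i = true} : Finset α)) (fun s i => decide (i ∈ s))
    ?_ ?_ ?_ ?_
  · intro y hy
    obtain ⟨hcard, ha⟩ := (mem_filter.1 (mem_coe.1 hy)).2
    refine mem_coe.2 (mem_powersetCard.2 ⟨fun i hi => mem_erase.2 ⟨?_, mem_univ i⟩, hcard⟩)
    rintro rfl
    simp [ha] at hi
  · intro s hs
    obtain ⟨hsub, hcard⟩ := mem_powersetCard.1 (mem_coe.1 hs)
    refine mem_coe.2 (mem_filter.2 ⟨mem_univ _, ?_, ?_⟩)
    · simpa using hcard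
    · simpa using fun ha => (mem_erase.1 (hsub ha)).1 rfl
  · intro y _
    funext i
    cases h : y i <;> simp [h]
  · intro s _
    ext i
    simp

lemma sum_binCDF_onesFirst_of_last_eq_false (n l z : ℕ) (p : ℝ) :
    ∑ y ∈ univ.filter (fun y : Fin (n + 1) → Bool =>
        #{i | y i = true} = z ∧ y (Fin.last n) = false),
      binCDF (onesFirst n y) l p = n.choose z * binCDF z l p := by
  rw [sum_congr rfl fun y hy => by
        rw [onesFirst_eq_card_of_last_eq_false (mem_filter.1 hy).2.2, (mem_filter.1 hy).2.1],
    sum_const, nsmul_eq_mul, card_filter_card_eq_and_apply_eq_false, Fintype.card_fin,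
    Nat.add_sub_cancel]

lemma choose_div_choose_succ {n z : ℕ} (hz : z ≤ n + 1) :
    (n.choose z : ℝ) / (n + 1).choose z = ((n : ℝ) - z + 1) / (n + 1) := by
  have hpos : (0 : ℝ) < (n + 1).choose z := by exact_mod_cast Nat.choose_pos hz
  have hpascal : (n.choose z : ℝ) * (n + 1) = (n + 1).choose z * ((n : ℝ) - z + 1) := by
    have := congrArg (Nat.cast : ℕ → ℝ) (Nat.choose_mul_succ_eq n z)
    push_cast [Nat.cast_sub hz] at this
    linarith
  rw [div_eq_div_iff hpos.ne' (by positivity), hpascal, mul_comm]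

lemma sum_binCDF_onesFirst_div_choose {n z : ℕ} (l : ℕ) (hz : z ≤ n + 1) (p : ℝ) :
    (∑ y ∈ univ.filter (fun y : Fin (n + 1) → Bool =>
        #{i | y i = true} = z ∧ y (Fin.last n) = false),
      binCDF (onesFirst n y) l p) / (n + 1).choose z
      = ((n : ℝ) - z + 1) * binCDF z l p / (n + 1) := by
  rw [sum_binCDF_onesFirst_of_last_eq_false, mul_div_right_comm, choose_div_choose_succ hz]
  ring

theorem stmt_14_general (n l z : ℕ) (lam : ℝ)
    (hz2 : z ≤ n + 1) :
    (l + 1 ≤ z →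
      (∑ y ∈ Finset.univ.filter
          (fun y : Fin (n + 1) → Bool =>
            (Finset.univ.filter (fun i => y i = true)).card = z
              ∧ y (Fin.last n) = false),
          binCDF (onesFirst n y) l (1 - lam)) / ((n + 1).choose z : ℝ)
        = ((n : ℝ) - z + 1) * binCDF z l (1 - lam) / ((n : ℝ) + 1)) ∧
    (z ≤ l →
      (∑ y ∈ Finset.univ.filter
          (fun y : Fin (n + 1) → Bool =>
            (Finset.univ.filter (fun i => y i = true)).card = z
              ∧ y (Fin.last n) = false),
          binCDF (onesFirst n y) l (1 - lam)) / ((n + 1).choose z : ℝ)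
        = ((n : ℝ) - z + 1) / ((n : ℝ) + 1)) := by
  have hmain := sum_binCDF_onesFirst_div_choose l hz2 (1 - lam)
  exact ⟨fun _ => hmain, fun hzl => by rw [hmain, binCDF_eq_one_of_le hzl, mul_one]⟩

/-- Conditioned on `Z = z` the distribution is uniform over weight-`z` strings;
the event `{Y_{n+1} = 0}` restricts to strings whose last coordinate is `false`,
and given such a string `P(L ≤ l) = B_{onesFirst y, l}(ν)`.  Hence
`Q(Y_{n+1}=0, L ≤ l | Z = z) = (n-z+1) B_{z,l}(ν)/(n+1)` for `l+1 ≤ z ≤ n+1`,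
and `= (n-z+1)/(n+1)` for `z ≤ l`. -/
theorem stmt_14 (n l z : ℕ) (lam : ℝ) (hlam0 : 0 < lam) (hlam1 : lam < 1)
    (hz2 : z ≤ n + 1) :
    (l + 1 ≤ z →
      (∑ y ∈ Finset.univ.filter
          (fun y : Fin (n + 1) → Bool =>
            (Finset.univ.filter (fun i => y i = true)).card = z
              ∧ y (Fin.last n) = false),
          binCDF (onesFirst n y) l (1 - lam)) / ((n + 1).choose z : ℝ)
        = ((n : ℝ) - z + 1) * binCDF z l (1 - lam) / ((n : ℝ) + 1)) ∧
    (z ≤ l →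
      (∑ y ∈ Finset.univ.filter
          (fun y : Fin (n + 1) → Bool =>
            (Finset.univ.filter (fun i => y i = true)).card = z
              ∧ y (Fin.last n) = false),
          binCDF (onesFirst n y) l (1 - lam)) / ((n + 1).choose z : ℝ)
        = ((n : ℝ) - z + 1) / ((n : ℝ) + 1)) :=
  stmt_14_general n l z lam hz2
end

section
/- Define h_z(l,n,λ) = 1 for 0 ≤ z ≤ l and h_z(l,n,λ) = ((n-z+1) B_{z,l}(ν) + z B_{z-1,l}(ν))/(n+1) for l+1 ≤ z ≤ n+1, with ν = 1-λ and 0 < λ < 1, l ≥ 0, n ≥ l+1. Then h_z(l,n,λ) > 0 for all 0 ≤ z ≤ n+1, and h_z(l,n,λ) is strictly decreasing in z for l ≤ z ≤ n+1. -/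
/-- `h_z(l,n,λ)`. -/
noncomputable def hFun (l n z : ℕ) (lam : ℝ) : ℝ :=
  if z ≤ l then 1
  else (((n : ℝ) - z + 1) * binCDF z l (1 - lam)
        + (z : ℝ) * binCDF (z - 1) l (1 - lam)) / ((n : ℝ) + 1)

section binCDF

variable {z l : ℕ} {p : ℝ}

theorem binCDF_of_le (h : z ≤ l) : binCDF z l p = 1 := by
  have hsub : Finset.range (z + 1) ⊆ Finset.range (l + 1) :=
    Finset.range_subset_range.2 (by omega)
  unfold binCDF
  rw [← Finset.sum_subset hsub fun j _ hj => by
    rw [Nat.choose_eq_zero_of_lt (by simpa using hj), Nat.cast_zero, zero_mul, zero_mul]]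
  calc ∑ j ∈ Finset.range (z + 1), (z.choose j : ℝ) * p ^ j * (1 - p) ^ (z - j)
      = ∑ j ∈ Finset.range (z + 1), p ^ j * (1 - p) ^ (z - j) * z.choose j :=
        Finset.sum_congr rfl fun _ _ => by ring
    _ = 1 := by rw [← add_pow, add_sub_cancel, one_pow]

theorem binCDF_succ_right (z l : ℕ) (p : ℝ) :
    binCDF z (l + 1) p
      = binCDF z l p + (z.choose (l + 1) : ℝ) * p ^ (l + 1) * (1 - p) ^ (z - (l + 1)) :=
  Finset.sum_range_succ _ _

theorem binCDF_succ_left (p : ℝ) (h : l ≤ z) :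
    binCDF (z + 1) l p = binCDF z l p - (z.choose l : ℝ) * p ^ (l + 1) * (1 - p) ^ (z - l) := by
  induction l generalizing z with
  | zero => simp [binCDF, pow_succ]; ring
  | succ l ih =>
    rw [binCDF_succ_right, ih (by omega), binCDF_succ_right, Nat.choose_succ_succ,
      Nat.add_sub_add_right, show z - l = z - (l + 1) + 1 by omega]
    push_cast
    ring

theorem binCDF_pos (hp0 : 0 ≤ p) (hp1 : p < 1) : 0 < binCDF z l p := by
  have hq : 0 < 1 - p := by linarith
  calc (0 : ℝ) < (1 - p) ^ z := by positivity
    _ = (z.choose 0 : ℝ) * p ^ 0 * (1 - p) ^ (z - 0) := by simp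
    _ ≤ binCDF z l p :=
      Finset.single_le_sum (f := fun j => (z.choose j : ℝ) * p ^ j * (1 - p) ^ (z - j))
        (fun j _ => by have := hq.le; positivity) (by simp)

theorem binCDF_succ_left_lt (hp0 : 0 < p) (hp1 : p < 1) (h : l ≤ z) :
    binCDF (z + 1) l p < binCDF z l p := by
  have hq : 0 < 1 - p := by linarith
  have hc : 0 < (z.choose l : ℝ) := by exact_mod_cast Nat.choose_pos h
  have : 0 < (z.choose l : ℝ) * p ^ (l + 1) * (1 - p) ^ (z - l) := by positivity
  linarith [binCDF_succ_left p h]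

end binCDF

section hFun

variable {l n z : ℕ} {lam : ℝ}

theorem hFun_of_le (h : l ≤ z) :
    hFun l n z lam = (((n : ℝ) - z + 1) * binCDF z l (1 - lam)
        + (z : ℝ) * binCDF (z - 1) l (1 - lam)) / ((n : ℝ) + 1) := by
  unfold hFun
  split_ifs with hc
  · obtain rfl : z = l := le_antisymm hc h
    rw [binCDF_of_le le_rfl, binCDF_of_le (by omega)]
    field_simp
    ring
  · rfl

theorem hFun_pos (hlam0 : 0 < lam) (hlam1 : lam < 1) (hz : z ≤ n + 1) : 0 < hFun l n z lam := by
  unfold hFun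
  split_ifs with hzl
  · exact one_pos
  have hp0 : 0 ≤ 1 - lam := by linarith
  have hp1 : 1 - lam < 1 := by linarith
  have hnz : (0 : ℝ) ≤ n - z + 1 := by
    have : (z : ℝ) ≤ n + 1 := by exact_mod_cast hz
    linarith
  have hz0 : (0 : ℝ) < z := by exact_mod_cast (show 0 < z by omega)
  have := binCDF_pos (z := z) (l := l) hp0 hp1
  have := binCDF_pos (z := z - 1) (l := l) hp0 hp1
  positivity

theorem hFun_succ_lt (hlam0 : 0 < lam) (hlam1 : lam < 1) (hn : l + 1 ≤ n) (hlz : l ≤ z)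
    (hzn : z < n + 1) :
    hFun l n (z + 1) lam < hFun l n z lam := by
  have hp0 : 0 < 1 - lam := by linarith
  have hp1 : 1 - lam < 1 := by linarith
  rw [hFun_of_le hlz, hFun_of_le (by omega), div_lt_div_iff_of_pos_right (by positivity),
    Nat.add_sub_cancel]
  push_cast
  have hnz : (z : ℝ) ≤ n := by exact_mod_cast (show z ≤ n by omega)
  have hdrop := binCDF_succ_left_lt hp0 hp1 hlz
  obtain rfl | hlt := hlz.eq_or_lt
  · have hln : (l : ℝ) + 1 ≤ n := by exact_mod_cast hn
    rw [binCDF_of_le le_rfl, binCDF_of_le (z := l - 1) (by omega)] at *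
    nlinarith
  · obtain ⟨m, rfl⟩ : ∃ m, z = m + 1 := ⟨z - 1, by omega⟩
    have hprev := binCDF_succ_left_lt hp0 hp1 (show l ≤ m by omega)
    push_cast at *
    nlinarith

theorem hFun_strictAntiOn (hlam0 : 0 < lam) (hlam1 : lam < 1) (hn : l + 1 ≤ n) :
    StrictAntiOn (fun z => hFun l n z lam) (Set.Icc l (n + 1)) :=
  strictAntiOn_of_add_one_lt Set.ordConnected_Icc fun _ _ hz hz' =>
    hFun_succ_lt hlam0 hlam1 hn hz.1 hz'.2

end hFun

theorem stmt_15 (lam : ℝ) (hlam0 : 0 < lam) (hlam1 : lam < 1)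
    (l n : ℕ) (hn : l + 1 ≤ n) :
    (∀ z : ℕ, z ≤ n + 1 → 0 < hFun l n z lam) ∧
    (∀ z₁ z₂ : ℕ, l ≤ z₁ → z₁ < z₂ → z₂ ≤ n + 1 →
      hFun l n z₂ lam < hFun l n z₁ lam) :=
  ⟨fun _ hz => hFun_pos hlam0 hlam1 hz, fun _ _ h₁ h₁₂ h₂ =>
    hFun_strictAntiOn hlam0 hlam1 hn ⟨h₁, by omega⟩ ⟨by omega, h₂⟩ h₁₂⟩
end
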